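/- Let P and Q be Borel probability measures on Ω. Then Q ≼ P if and only if for every continuous monotone function f : Ω → [0,1] (i.e. f continuous with f(ω) ≤ f(ω') whenever ω ≤ ω') one has ∫ f dQ ≤ ∫ f dP. -/

import Mathlib

/-!
At resolution `N` the laws of the first `N` coordinates of `Q` and `P` satisfy the hypothesis
for every monotone function, and the finite Strassen theorem couples them below each other. The
finite theorem is Hahn–Banach: if `q` were not the first marginal of a plan with second marginal
`p` supported on `≤`, a separating functional `F` would be beaten by the plan moving the mass at
each `b` to a maximiser `s b` of `F` below `b`, because `F ∘ s` is a monotone majorant of `F`, so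
`∑ q F ≤ ∑ q (F ∘ s) ≤ ∑ p (F ∘ s)`. Extended by zeros, these couplings have marginals converging
weakly to `Q` and `P`. A weak limit point exists because the probability measures on the compact
metrizable `Ω × Ω` form a compact space; it couples `Q` and `P`, and by the portmanteau theorem it
is still concentrated on the closed set `{ω ≤ ω'}`.
-/

open MeasureTheory

/-- `Q` can be coupled below `P`: there is a probability measure `R` on `Ω × Ω`
with first marginal `Q`, second marginal `P`, concentrated on pairs `(ω, ω')`
with `ω ≤ ω'` coordinatewise. -/
def CoupledBelow (Q P : Measure (ℕ → Bool)) : Prop :=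
  ∃ R : Measure ((ℕ → Bool) × (ℕ → Bool)), IsProbabilityMeasure R ∧
    R.map Prod.fst = Q ∧ R.map Prod.snd = P ∧
    R {q : (ℕ → Bool) × (ℕ → Bool) | q.1 ≤ q.2} = 1

open Filter Finset Topology

section FiniteStrassen

variable {α : Type*} [Fintype α] [Preorder α]

def monotonePlans (p : α → ℝ) : Set (α × α → ℝ) :=
  {r | 0 ≤ r ∧ (∀ x : α × α, ¬ x.1 ≤ x.2 → r x = 0) ∧ ∀ b, ∑ a, r (a, b) = p b}

def rowSum : (α × α → ℝ) →ₗ[ℝ] α → ℝ where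
  toFun r a := ∑ b, r (a, b)
  map_add' r s := by ext; simp [sum_add_distrib]
  map_smul' c r := by ext; simp [mul_sum]

theorem convex_monotonePlans (p : α → ℝ) : Convex ℝ (monotonePlans p) := by
  rintro r ⟨hr0, hr, hrp⟩ s ⟨hs0, hs, hsp⟩ θ η hθ hη hθη
  refine ⟨add_nonneg (smul_nonneg hθ hr0) (smul_nonneg hη hs0),
    fun x hx => by simp [hr x hx, hs x hx], fun b => ?_⟩
  simp only [Pi.add_apply, Pi.smul_apply, smul_eq_mul, sum_add_distrib, ← mul_sum, hrp, hsp]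
  rw [← add_mul, hθη, one_mul]

theorem isCompact_monotonePlans (p : α → ℝ) : IsCompact (monotonePlans p) := by
  have hclosed : IsClosed (monotonePlans p) := by
    simp only [monotonePlans, Set.ofPred_and, Set.ofPred_forall]
    exact isClosed_Ici.inter <|
      (isClosed_iInter fun x => isClosed_iInter fun _ =>
        isClosed_eq (continuous_apply x) continuous_const).inter
      (isClosed_iInter fun b =>
        isClosed_eq (continuous_finsetSum _ fun a _ => continuous_apply _) continuous_const)
  refine (isCompact_Icc (a := 0) (b := fun x => p x.2)).of_isClosed_subset hclosed ?_
  rintro r ⟨hr0, -, hrp⟩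
  refine ⟨hr0, fun x => ?_⟩
  show r x ≤ p x.2
  rw [← hrp x.2]
  exact single_le_sum (fun a _ => hr0 (a, x.2)) (mem_univ x.1)

theorem exists_mem_monotonePlans_sum_mul_le {q p : α → ℝ} (hq : 0 ≤ q) (hp : 0 ≤ p)
    (h : ∀ g : α → ℝ, Monotone g → ∑ a, q a * g a ≤ ∑ a, p a * g a) (F : α → ℝ) :
    ∃ r ∈ monotonePlans p, ∑ a, q a * F a ≤ ∑ a, rowSum r a * F a := by
  classical
  choose s hs using fun b => Set.exists_max_image (Set.Iic b) F (Set.toFinite _) ⟨b, le_rfl⟩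
  have hmono : Monotone (F ∘ s) := fun b b' hbb' => (hs b').2 _ ((hs b).1.trans hbb')
  refine ⟨fun x => if x.1 = s x.2 then p x.2 else 0,
    ⟨fun x => by dsimp only; split_ifs; exacts [hp x.2, le_rfl],
      fun x hx => if_neg fun h : x.1 = s x.2 => hx (h ▸ (hs x.2).1), fun b => by simp⟩, ?_⟩
  calc ∑ a, q a * F a ≤ ∑ a, q a * F (s a) :=
        sum_le_sum fun a _ => mul_le_mul_of_nonneg_left ((hs a).2 a le_rfl) (hq a)
    _ ≤ ∑ b, p b * F (s b) := h _ hmono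
    _ = _ := by
      simp only [rowSum, LinearMap.coe_mk, AddHom.coe_mk, sum_mul, ite_mul, zero_mul]
      rw [sum_comm]
      simp

theorem exists_transportPlan_of_monotone {q p : α → ℝ} (hq : 0 ≤ q) (hp : 0 ≤ p)
    (h : ∀ g : α → ℝ, Monotone g → ∑ a, q a * g a ≤ ∑ a, p a * g a) :
    ∃ r : α × α → ℝ, 0 ≤ r ∧ (∀ x : α × α, ¬ x.1 ≤ x.2 → r x = 0) ∧
      (∀ a, ∑ b, r (a, b) = q a) ∧ ∀ b, ∑ a, r (a, b) = p b := by
  classical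
  suffices q ∈ rowSum '' monotonePlans p by
    obtain ⟨r, ⟨hr0, hr, hrp⟩, hrq⟩ := this
    exact ⟨r, hr0, hr, fun a => congrFun hrq a, hrp⟩
  by_contra hq_not
  obtain ⟨φ, u, hφ, huq⟩ := geometric_hahn_banach_closed_point
    ((convex_monotonePlans p).linear_image rowSum)
    ((isCompact_monotonePlans p).image rowSum.continuous_of_finiteDimensional).isClosed hq_not
  set F : α → ℝ := fun a => φ fun b => if a = b then 1 else 0
  have hφF (v : α → ℝ) : φ v = ∑ a, v a * F a := φ.toLinearMap.pi_apply_eq_sum_univ v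
  obtain ⟨r, hr, hle⟩ := exists_mem_monotonePlans_sum_mul_le hq hp h F
  have := hφ _ ⟨r, hr, rfl⟩
  rw [hφF] at this huq
  linarith

variable [MeasurableSpace α] [MeasurableSingletonClass α]

theorem exists_coupling_of_integral_le {μ ν : Measure α} [IsFiniteMeasure μ]
    [IsFiniteMeasure ν] (h : ∀ g : α → ℝ, Monotone g → ∫ a, g a ∂μ ≤ ∫ a, g a ∂ν) :
    ∃ ρ : Measure (α × α), ρ.map Prod.fst = μ ∧ ρ.map Prod.snd = ν ∧ ∀ᵐ x ∂ρ, x.1 ≤ x.2 := by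
  classical
  obtain ⟨r, hr0, hr, hrμ, hrν⟩ := exists_transportPlan_of_monotone
    (q := fun a => μ.real {a}) (p := fun a => ν.real {a})
    (fun a => measureReal_nonneg) (fun a => measureReal_nonneg)
    fun g hg => by simpa [integral_fintype, Integrable.of_finite] using h g hg
  set ρ : Measure (α × α) := ∑ x, ENNReal.ofReal (r x) • Measure.dirac x
  have hρ (s : Set (α × α)) : ρ s = ∑ x, ENNReal.ofReal (r x) * s.indicator 1 x := by
    simp [ρ, Measure.dirac_apply]
  refine ⟨ρ, Measure.ext_iff_singleton.2 fun a => ?_,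
    Measure.ext_iff_singleton.2 fun b => ?_, ?_⟩
  · rw [Measure.map_apply measurable_fst (measurableSet_singleton a), hρ, Fintype.sum_prod_type]
    simp only [Set.indicator_apply, Set.mem_preimage, Set.mem_singleton_iff, Pi.one_apply,
      mul_ite, mul_one, mul_zero, sum_ite_irrel, sum_const_zero, sum_ite_eq', mem_univ,
      ↓reduceIte]
    rw [← ENNReal.ofReal_sum_of_nonneg fun b _ => hr0 _, hrμ, ofReal_measureReal]
  · rw [Measure.map_apply measurable_snd (measurableSet_singleton b), hρ, Fintype.sum_prod_type]
    simp only [Set.indicator_apply, Set.mem_preimage, Set.mem_singleton_iff, Pi.one_apply,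
      mul_ite, mul_one, mul_zero, sum_ite_eq', mem_univ, ↓reduceIte]
    rw [← ENNReal.ofReal_sum_of_nonneg fun a _ => hr0 _, hrν, ofReal_measureReal]
  · rw [ae_iff, hρ]
    refine sum_eq_zero fun x _ => ?_
    by_cases hx : x.1 ≤ x.2 <;> simp [hx, hr]

end FiniteStrassen

theorem exists_coupling_of_tendsto {X Y ι : Type*} [MeasurableSpace X] [TopologicalSpace X]
    [BorelSpace X] [CompactSpace X] [TopologicalSpace.MetrizableSpace X]
    [MeasurableSpace Y] [TopologicalSpace Y] [BorelSpace Y] [CompactSpace Y]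
    [TopologicalSpace.MetrizableSpace Y] {l : Filter ι} [l.NeBot]
    {μs : ι → ProbabilityMeasure X} {μ : ProbabilityMeasure X}
    {νs : ι → ProbabilityMeasure Y} {ν : ProbabilityMeasure Y}
    (hμ : Tendsto μs l (𝓝 μ)) (hν : Tendsto νs l (𝓝 ν)) {S : Set (X × Y)} (hS : IsClosed S)
    (Rs : ι → ProbabilityMeasure (X × Y))
    (hRμ : ∀ i, (Rs i).map measurable_fst.aemeasurable = μs i)
    (hRν : ∀ i, (Rs i).map measurable_snd.aemeasurable = νs i)
    (hRS : ∀ i, (Rs i : Measure (X × Y)) S = 1) :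
    ∃ R : ProbabilityMeasure (X × Y), R.map measurable_fst.aemeasurable = μ ∧
      R.map measurable_snd.aemeasurable = ν ∧ (R : Measure (X × Y)) S = 1 := by
  obtain ⟨R, -, hR⟩ := isCompact_univ.ultrafilter_le_nhds ((Ultrafilter.of l).map Rs)
    (le_principal_iff.2 univ_mem)
  have hU : (Ultrafilter.of l : Filter ι) ≤ l := Ultrafilter.of_le l
  refine ⟨R, tendsto_nhds_unique ?_ (hμ.mono_left hU), tendsto_nhds_unique ?_ (hν.mono_left hU),
    le_antisymm prob_le_one ?_⟩
  · simpa only [Function.comp_def, hRμ] using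
      ((ProbabilityMeasure.continuous_map continuous_fst).tendsto R).comp hR
  · simpa only [Function.comp_def, hRν] using
      ((ProbabilityMeasure.continuous_map continuous_snd).tendsto R).comp hR
  · simpa [hRS] using ProbabilityMeasure.limsup_measure_closed_le_of_tendsto hR hS

theorem ProbabilityMeasure.tendsto_map_of_forall_tendsto {X : Type*} [MeasurableSpace X]
    [TopologicalSpace X] [OpensMeasurableSpace X] (μ : ProbabilityMeasure X) {fs : ℕ → X → X}
    (hfs : ∀ n, Measurable (fs n)) (h : ∀ x, Tendsto (fun n => fs n x) atTop (𝓝 x)) :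
    Tendsto (fun n => μ.map (hfs n).aemeasurable) atTop (𝓝 μ) := by
  refine ProbabilityMeasure.tendsto_iff_forall_integral_tendsto.2 fun g => ?_
  simp_rw [ProbabilityMeasure.toMeasure_map,
    integral_map (hfs _).aemeasurable g.continuous.aestronglyMeasurable]
  exact tendsto_integral_of_dominated_convergence (fun _ => ‖g‖)
    (fun n => (g.continuous.measurable.comp (hfs n)).aestronglyMeasurable) (integrable_const _)
    (fun n => ae_of_all _ fun x => g.norm_coe_le_norm _)
    (ae_of_all _ fun x => (g.continuous.tendsto _).comp (h x))

theorem integral_le_integral_of_coupling {X : Type*} [MeasurableSpace X] [Preorder X]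
    {μ ν : Measure X} {ρ : Measure (X × X)} (hμ : ρ.map Prod.fst = μ) (hν : ρ.map Prod.snd = ν)
    (hρ : ∀ᵐ q ∂ρ, q.1 ≤ q.2) {f : X → ℝ} (hf : Monotone f) (hfμ : Integrable f μ)
    (hfν : Integrable f ν) : ∫ x, f x ∂μ ≤ ∫ x, f x ∂ν := by
  subst hμ hν
  rw [integral_map measurable_fst.aemeasurable hfμ.1,
    integral_map measurable_snd.aemeasurable hfν.1]
  exact integral_mono_ae ((integrable_map_measure hfμ.1 measurable_fst.aemeasurable).1 hfμ)
    ((integrable_map_measure hfν.1 measurable_snd.aemeasurable).1 hfν) (hρ.mono fun q hq => hf hq)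

theorem integral_le_integral_of_forall_mem_Icc {X : Type*} [TopologicalSpace X] [CompactSpace X]
    [MeasurableSpace X] [OpensMeasurableSpace X] [Preorder X] [OrderBot X] [OrderTop X]
    {μ ν : Measure X} [IsProbabilityMeasure μ] [IsProbabilityMeasure ν]
    (h : ∀ f : X → ℝ, Continuous f → Monotone f → (∀ x, f x ∈ Set.Icc (0 : ℝ) 1) →
      ∫ x, f x ∂μ ≤ ∫ x, f x ∂ν)
    {f : X → ℝ} (hf : Continuous f) (hmono : Monotone f) : ∫ x, f x ∂μ ≤ ∫ x, f x ∂ν := by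
  -- the `+ 1` keeps `d` positive when `f` is constant
  set d := f ⊤ - f ⊥ + 1
  have hd : 0 < d := by linarith [hmono (bot_le : (⊥ : X) ≤ ⊤)]
  have hint (m : Measure X) [IsProbabilityMeasure m] :
      ∫ x, (f x - f ⊥) / d ∂m = (∫ x, f x ∂m - f ⊥) / d := by
    rw [integral_div, integral_sub (hf.integrable_of_hasCompactSupport
      (HasCompactSupport.of_compactSpace f)) (integrable_const _)]
    simp
  have := h (fun x => (f x - f ⊥) / d) ((hf.sub continuous_const).div_const d)
    (fun x y hxy => by dsimp only; gcongr; exact hmono hxy) fun x =>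
      ⟨div_nonneg (by linarith [hmono (bot_le : ⊥ ≤ x)]) hd.le,
        (div_le_one hd).2 (by linarith [hmono (le_top : x ≤ ⊤)])⟩
  rw [hint μ, hint ν] at this
  linarith [(div_le_div_iff_of_pos_right hd).1 this]

instance Bool.orderClosedTopology : OrderClosedTopology Bool := ⟨isClosed_discrete _⟩

def truncate (N : ℕ) (ω : ℕ → Bool) : Fin N → Bool := fun i => ω i

def zeroExtend (N : ℕ) (a : Fin N → Bool) : ℕ → Bool :=
  fun i => if h : i < N then a ⟨i, h⟩ else false

theorem continuous_truncate (N : ℕ) : Continuous (truncate N) :=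
  continuous_pi fun _ => continuous_apply _

theorem monotone_truncate (N : ℕ) : Monotone (truncate N) := fun _ _ h i => h i

theorem monotone_zeroExtend (N : ℕ) : Monotone (zeroExtend N) := by
  intro a b h i
  simp only [zeroExtend]
  split_ifs
  exacts [h _, le_rfl]

theorem tendsto_zeroExtend_truncate (ω : ℕ → Bool) :
    Tendsto (fun N => zeroExtend N (truncate N ω)) atTop (𝓝 ω) :=
  tendsto_pi_nhds.2 fun i => tendsto_atTop_of_eventually_const fun N (hN : i + 1 ≤ N) => by
    simp [zeroExtend, truncate, Nat.lt_of_succ_le hN]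

theorem measurableSet_setOf_fst_le_snd :
    MeasurableSet {q : (ℕ → Bool) × (ℕ → Bool) | q.1 ≤ q.2} :=
  measurableSet_le measurable_fst measurable_snd

theorem CoupledBelow.integral_le {Q P : Measure (ℕ → Bool)} [IsFiniteMeasure Q]
    [IsFiniteMeasure P] (h : CoupledBelow Q P) {f : (ℕ → Bool) → ℝ} (hf : Continuous f)
    (hmono : Monotone f) : ∫ ω, f ω ∂Q ≤ ∫ ω, f ω ∂P := by
  obtain ⟨R, hR, hRQ, hRP, hRS⟩ := h
  have hint (μ : Measure (ℕ → Bool)) [IsFiniteMeasure μ] : Integrable f μ :=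
    hf.integrable_of_hasCompactSupport (HasCompactSupport.of_compactSpace f)
  exact integral_le_integral_of_coupling hRQ hRP
    ((ae_iff_prob_eq_one (measurableSet_setOfPred.1 measurableSet_setOf_fst_le_snd)).2 hRS)
    hmono (hint Q) (hint P)

theorem coupledBelow_map_zeroExtend_truncate {Q P : Measure (ℕ → Bool)} [IsProbabilityMeasure Q]
    [IsProbabilityMeasure P]
    (h : ∀ f : (ℕ → Bool) → ℝ, Continuous f → Monotone f → ∫ ω, f ω ∂Q ≤ ∫ ω, f ω ∂P) (N : ℕ) :
    CoupledBelow (Q.map (zeroExtend N ∘ truncate N)) (P.map (zeroExtend N ∘ truncate N)) := by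
  have htrunc := (continuous_truncate N).measurable
  have hext : Measurable (zeroExtend N) := measurable_of_finite _
  have hext2 : Measurable (Prod.map (zeroExtend N) (zeroExtend N)) := hext.prodMap hext
  obtain ⟨ρ, hρQ, hρP, hρ⟩ := exists_coupling_of_integral_le (μ := Q.map (truncate N))
    (ν := P.map (truncate N)) fun g hg => by
      rw [integral_map htrunc.aemeasurable (measurable_of_finite g).aestronglyMeasurable,
        integral_map htrunc.aemeasurable (measurable_of_finite g).aestronglyMeasurable]
      exact h _ (continuous_of_discreteTopology.comp (continuous_truncate N))
        (hg.comp (monotone_truncate N))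
  have : IsProbabilityMeasure ρ :=
    (Measure.isProbabilityMeasure_map_iff measurable_fst.aemeasurable).1
      (hρQ ▸ Measure.isProbabilityMeasure_map htrunc.aemeasurable)
  have hR := Measure.isProbabilityMeasure_map (μ := ρ) hext2.aemeasurable
  refine ⟨ρ.map (Prod.map (zeroExtend N) (zeroExtend N)), hR, ?_, ?_, ?_⟩
  · rw [Measure.map_map measurable_fst hext2, ← Measure.map_map hext htrunc, ← hρQ,
      Measure.map_map hext measurable_fst]
    rfl
  · rw [Measure.map_map measurable_snd hext2, ← Measure.map_map hext htrunc, ← hρP,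
      Measure.map_map hext measurable_snd]
    rfl
  · rw [← ae_iff_prob_eq_one (measurableSet_setOfPred.1 measurableSet_setOf_fst_le_snd),
      ae_map_iff hext2.aemeasurable measurableSet_setOf_fst_le_snd]
    exact hρ.mono fun x hx => monotone_zeroExtend N hx

theorem coupledBelow_of_tendsto {Qs Ps : ℕ → ProbabilityMeasure (ℕ → Bool)}
    {Q P : ProbabilityMeasure (ℕ → Bool)} (hQ : Tendsto Qs atTop (𝓝 Q))
    (hP : Tendsto Ps atTop (𝓝 P)) (h : ∀ N, CoupledBelow (Qs N) (Ps N)) :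
    CoupledBelow Q P := by
  choose Rs hRs hRQ hRP hRS using h
  obtain ⟨R, hRQ, hRP, hRS⟩ := exists_coupling_of_tendsto hQ hP
    (isClosed_le continuous_fst continuous_snd) (fun N => ⟨Rs N, hRs N⟩)
    (fun N => Subtype.ext (hRQ N)) (fun N => Subtype.ext (hRP N)) hRS
  exact ⟨R, inferInstance, congrArg Subtype.val hRQ, congrArg Subtype.val hRP, hRS⟩

/-- Strassen's coupling criterion on Cantor space: `Q ≼ P` iff
`∫ f dQ ≤ ∫ f dP` for every continuous monotone `f : Ω → [0,1]`. -/
theorem strassen_coupling_criterion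
    (P Q : Measure (ℕ → Bool)) [IsProbabilityMeasure P] [IsProbabilityMeasure Q] :
    CoupledBelow Q P ↔
      ∀ f : (ℕ → Bool) → ℝ, Continuous f → Monotone f →
        (∀ ω, f ω ∈ Set.Icc (0 : ℝ) 1) →
        ∫ ω, f ω ∂Q ≤ ∫ ω, f ω ∂P := by
  refine ⟨fun h f hf hmono _ => h.integral_le hf hmono, fun h => ?_⟩
  have hπ (N : ℕ) : Measurable (zeroExtend N ∘ truncate N) :=
    (measurable_of_finite _).comp (continuous_truncate N).measurable
  exact coupledBelow_of_tendsto
    (ProbabilityMeasure.tendsto_map_of_forall_tendsto ⟨Q, inferInstance⟩ hπ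
      tendsto_zeroExtend_truncate)
    (ProbabilityMeasure.tendsto_map_of_forall_tendsto ⟨P, inferInstance⟩ hπ
      tendsto_zeroExtend_truncate)
    (coupledBelow_map_zeroExtend_truncate (Q := Q) (P := P) fun f hf hmono =>
      integral_le_integral_of_forall_mem_Icc h hf hmono)
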